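/- arXiv:2410.08331 — 12 statements merged into one kernel-verified Lean document; each statement's English description precedes it below -/
import Mathlib

section
/- Let H be a real Hilbert space, M a nonempty subset of H, and (x_k) a sequence in H that is Fejér* monotone with respect to M. Then (x_k) is Fejér* monotone with respect to the convex hull of M. -/
open scoped RealInnerProductSpace

/-- Fejér* monotonicity: for every `x ∈ M` there is an index `N` from which the
distances to `x` are nonincreasing. -/
def FejerStarMonotone {H : Type*} [NormedAddCommGroup H] [InnerProductSpace ℝ H]
    (x : ℕ → H) (M : Set H) : Prop :=
  ∀ p ∈ M, ∃ N : ℕ, ∀ k ≥ N, ‖x (k + 1) - p‖ ≤ ‖x k - p‖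

lemma fejer_key {H : Type*} [NormedAddCommGroup H] [InnerProductSpace ℝ H]
    (y p q : H) (a b : ℝ) (hab : a + b = 1) :
    ‖y - (a • p + b • q)‖ ^ 2
      = a * ‖y - p‖ ^ 2 + b * ‖y - q‖ ^ 2 - a * b * ‖p - q‖ ^ 2 := by
  have hb : b = 1 - a := by linarith
  subst hb
  simp only [← real_inner_self_eq_norm_sq, inner_sub_left, inner_sub_right,
    inner_add_left, inner_add_right, real_inner_smul_left, real_inner_smul_right,
    real_inner_comm p y, real_inner_comm q y, real_inner_comm q p]
  ring

theorem fejerStar_convexHull {H : Type*} [NormedAddCommGroup H] [InnerProductSpace ℝ H]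
    [CompleteSpace H] (M : Set H) (hM : M.Nonempty) (x : ℕ → H)
    (hx : FejerStarMonotone x M) :
    FejerStarMonotone x (convexHull ℝ M) := by
  have hsub : convexHull ℝ M ⊆
      {p : H | ∃ N : ℕ, ∀ k ≥ N, ‖x (k + 1) - p‖ ≤ ‖x k - p‖} := by
    apply convexHull_min
    · intro p hp; exact hx p hp
    · intro p hp q hq a b ha hb hab
      obtain ⟨Np, hNp⟩ := hp
      obtain ⟨Nq, hNq⟩ := hq
      refine ⟨max Np Nq, fun k hk => ?_⟩
      have h1 := hNp k (le_trans (le_max_left _ _) hk)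
      have h2 := hNq k (le_trans (le_max_right _ _) hk)
      have h1' := mul_le_mul_of_nonneg_left (pow_le_pow_left₀ (norm_nonneg _) h1 2) ha
      have h2' := mul_le_mul_of_nonneg_left (pow_le_pow_left₀ (norm_nonneg _) h2 2) hb
      have hsq : ‖x (k + 1) - (a • p + b • q)‖ ^ 2 ≤ ‖x k - (a • p + b • q)‖ ^ 2 := by
        rw [fejer_key _ _ _ _ _ hab, fejer_key _ _ _ _ _ hab]
        linarith
      calc ‖x (k + 1) - (a • p + b • q)‖
          = Real.sqrt (‖x (k + 1) - (a • p + b • q)‖ ^ 2) := by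
            rw [Real.sqrt_sq (norm_nonneg _)]
        _ ≤ Real.sqrt (‖x k - (a • p + b • q)‖ ^ 2) := Real.sqrt_le_sqrt hsq
        _ = ‖x k - (a • p + b • q)‖ := Real.sqrt_sq (norm_nonneg _)
  intro p hp
  exact hsub hp
end

section
/- Let H be a real Hilbert space, M a nonempty subset of H, and (x_k) a sequence in H that is Fejér* monotone with respect to M. Then for every point x̄ in the closure of the convex hull of M, the scalar sequence (‖x_k − x̄‖) converges (i.e., has a limit in ℝ). -/
open scoped RealInnerProductSpace

private lemma conv_of_eventually_antitone (f : ℕ → ℝ) (h0 : ∀ k, 0 ≤ f k) (N : ℕ)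
    (h : ∀ k ≥ N, f (k + 1) ≤ f k) :
    ∃ l, Filter.Tendsto f Filter.atTop (nhds l) := by
  set g : ℕ → ℝ := fun k => f (k + N) with hg
  have hanti : Antitone g := by
    apply antitone_nat_of_succ_le
    intro n
    have := h (n + N) (Nat.le_add_left _ _)
    show f (n + 1 + N) ≤ f (n + N)
    rw [show n + 1 + N = n + N + 1 from by omega]
    exact this
  have hbdd : BddBelow (Set.range g) := ⟨0, by rintro y ⟨k, rfl⟩; exact h0 _⟩
  refine ⟨⨅ n, g n, ?_⟩
  have := tendsto_atTop_ciInf hanti hbdd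
  exact (Filter.tendsto_add_atTop_iff_nat N).mp this

theorem fejerStar_dist_converges_closure_convexHull {H : Type*} [NormedAddCommGroup H]
    [InnerProductSpace ℝ H] [CompleteSpace H] (M : Set H) (hM : M.Nonempty) (x : ℕ → H)
    (hx : FejerStarMonotone x M) :
    ∀ p ∈ closure (convexHull ℝ M), ∃ l : ℝ,
      Filter.Tendsto (fun k => ‖x k - p‖) Filter.atTop (nhds l) := by
  -- the set of points p such that ‖x k‖² − 2⟪x k, p⟫ converges
  set S : Set H := {p : H | ∃ l : ℝ,
      Filter.Tendsto (fun k => ‖x k‖ ^ 2 - 2 * ⟪x k, p⟫) Filter.atTop (nhds l)} with hS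
  have hMS : M ⊆ S := by
    intro q hq
    obtain ⟨N, hN⟩ := hx q hq
    obtain ⟨l, hl⟩ := conv_of_eventually_antitone (fun k => ‖x k - q‖)
      (fun k => norm_nonneg _) N hN
    refine ⟨l ^ 2 - ‖q‖ ^ 2, ?_⟩
    have h2 : Filter.Tendsto (fun k => ‖x k - q‖ ^ 2 - ‖q‖ ^ 2) Filter.atTop
        (nhds (l ^ 2 - ‖q‖ ^ 2)) := ((hl.pow 2)).sub tendsto_const_nhds
    refine h2.congr fun k => ?_
    have := @norm_sub_sq_real H _ _ (x k) q
    ring_nf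
    ring_nf at this
    linarith
  have hSconv : Convex ℝ S := by
    rintro p ⟨l1, hl1⟩ q ⟨l2, hl2⟩ a b ha hb hab
    refine ⟨a * l1 + b * l2, ?_⟩
    have := (hl1.const_mul a).add (hl2.const_mul b)
    refine this.congr fun k => ?_
    simp only [inner_add_right, real_inner_smul_right]
    nlinarith [hab]
  have hHull : ∀ p ∈ convexHull ℝ M, ∃ l : ℝ,
      Filter.Tendsto (fun k => ‖x k - p‖) Filter.atTop (nhds l) := by
    intro p hp
    obtain ⟨l, hl⟩ := convexHull_min hMS hSconv hp
    have hsq : Filter.Tendsto (fun k => ‖x k - p‖ ^ 2) Filter.atTop (nhds (l + ‖p‖ ^ 2)) := by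
      have := hl.add (tendsto_const_nhds (x := ‖p‖ ^ 2))
      refine this.congr fun k => ?_
      have := @norm_sub_sq_real H _ _ (x k) p
      linarith
    refine ⟨Real.sqrt (l + ‖p‖ ^ 2), ?_⟩
    have := (Real.continuous_sqrt.tendsto _).comp hsq
    refine this.congr fun k => ?_
    simp [Real.sqrt_sq (norm_nonneg _)]
  -- extend to the closure via a Cauchy argument
  intro p hp
  have hcauchy : CauchySeq (fun k => ‖x k - p‖) := by
    rw [Metric.cauchySeq_iff]
    intro ε hε
    obtain ⟨q, hqhull, hdq⟩ := Metric.mem_closure_iff.mp hp (ε / 4) (by linarith)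
    obtain ⟨l, hl⟩ := hHull q hqhull
    have hc : CauchySeq (fun k => ‖x k - q‖) := hl.cauchySeq
    obtain ⟨N, hN⟩ := Metric.cauchySeq_iff.mp hc (ε / 2) (by linarith)
    refine ⟨N, fun m hm n hn => ?_⟩
    have h1 : |‖x m - p‖ - ‖x m - q‖| ≤ ‖q - p‖ := by
      have := abs_norm_sub_norm_le (x m - p) (x m - q)
      simpa [sub_sub_sub_cancel_left] using this
    have h2 : |‖x n - p‖ - ‖x n - q‖| ≤ ‖q - p‖ := by
      have := abs_norm_sub_norm_le (x n - p) (x n - q)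
      simpa [sub_sub_sub_cancel_left] using this
    have h3 := hN m hm n hn
    have hdq' : ‖q - p‖ < ε / 4 := by
      rw [norm_sub_rev]; simpa [dist_eq_norm] using hdq
    rw [Real.dist_eq] at h3 ⊢
    have t1 : |‖x m - p‖ - ‖x n - p‖| ≤ |‖x m - p‖ - ‖x m - q‖| + |‖x m - q‖ - ‖x n - p‖| :=
      abs_sub_le _ _ _
    have t2 : |‖x m - q‖ - ‖x n - p‖| ≤ |‖x m - q‖ - ‖x n - q‖| + |‖x n - q‖ - ‖x n - p‖| :=
      abs_sub_le _ _ _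
    have t3 : |‖x n - q‖ - ‖x n - p‖| = |‖x n - p‖ - ‖x n - q‖| := abs_sub_comm _ _
    linarith
  exact cauchySeq_tendsto_of_complete hcauchy
end

section
/- Let H be a real Hilbert space, M a nonempty subset of H, and (x_k) a sequence in H that is Fejér* monotone with respect to M. Then for every pair of points x̄₁, x̄₂ in the closure of the convex hull of M, the scalar sequence (⟨x̄₁ − x̄₂, x_k⟩) of inner products converges (i.e., has a limit in ℝ). -/
open scoped RealInnerProductSpace

theorem fejerStar_inner_converges {H : Type*} [NormedAddCommGroup H]
    [InnerProductSpace ℝ H] [CompleteSpace H] (M : Set H) (hM : M.Nonempty) (x : ℕ → H)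
    (hx : FejerStarMonotone x M) :
    ∀ p₁ ∈ closure (convexHull ℝ M), ∀ p₂ ∈ closure (convexHull ℝ M), ∃ l : ℝ,
      Filter.Tendsto (fun k => ⟪p₁ - p₂, x k⟫) Filter.atTop (nhds l) := by
  -- key: for each p ∈ M, ‖x k - p‖ converges
  have hdist : ∀ p ∈ M, ∃ l : ℝ, Filter.Tendsto (fun k => ‖x k - p‖)
      Filter.atTop (nhds l) := by
    intro p hp
    obtain ⟨N, hN⟩ := hx p hp
    have hanti : Antitone (fun k => ‖x (k + N) - p‖) := by
      apply antitone_nat_of_succ_le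
      intro n
      have := hN (n + N) (Nat.le_add_left N n)
      simpa [Nat.add_right_comm] using this
    have hbdd : BddBelow (Set.range (fun k => ‖x (k + N) - p‖)) :=
      ⟨0, by rintro _ ⟨k, rfl⟩; positivity⟩
    refine ⟨⨅ k, ‖x (k + N) - p‖, ?_⟩
    have h1 := tendsto_atTop_ciInf hanti hbdd
    exact (Filter.tendsto_add_atTop_iff_nat N).mp h1
  -- boundedness of x
  obtain ⟨p₀, hp₀⟩ := hM
  obtain ⟨l₀, hl₀⟩ := hdist p₀ hp₀
  obtain ⟨B, hB⟩ : ∃ B : ℝ, ∀ k, ‖x k‖ ≤ B := by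
    obtain ⟨C, hC⟩ := hl₀.bddAbove_range
    refine ⟨C + ‖p₀‖, fun k => ?_⟩
    have h1 : ‖x k - p₀‖ ≤ C := hC ⟨k, rfl⟩
    calc ‖x k‖ = ‖x k - p₀ + p₀‖ := by rw [sub_add_cancel]
      _ ≤ ‖x k - p₀‖ + ‖p₀‖ := norm_add_le _ _
      _ ≤ C + ‖p₀‖ := by linarith
  have hB0 : 0 ≤ B := le_trans (norm_nonneg _) (hB 0)
  -- the set of points p for which φ_k(p) converges
  set T : Set H := {p : H | ∃ l : ℝ,
    Filter.Tendsto (fun k => ⟪p, x k⟫ - ‖x k‖ ^ 2 / 2) Filter.atTop (nhds l)} with hT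
  have hMT : M ⊆ T := by
    intro p hp
    obtain ⟨l, hl⟩ := hdist p hp
    refine ⟨(‖p‖ ^ 2 - l ^ 2) / 2, ?_⟩
    have h2 : Filter.Tendsto (fun k => (‖p‖ ^ 2 - ‖x k - p‖ ^ 2) / 2)
        Filter.atTop (nhds ((‖p‖ ^ 2 - l ^ 2) / 2)) :=
      (((hl.pow 2).const_sub _).div_const 2)
    convert h2 using 2 with k
    have := @norm_sub_sq_real H _ _ (x k) p
    have hcomm : ⟪x k, p⟫ = ⟪p, x k⟫ := real_inner_comm _ _
    rw [hcomm] at this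
    linarith
  have hTconv : Convex ℝ T := by
    rintro p ⟨l₁, hl₁⟩ q ⟨l₂, hl₂⟩ a b ha hb hab
    refine ⟨a * l₁ + b * l₂, ?_⟩
    have h := (hl₁.const_mul a).add (hl₂.const_mul b)
    convert h using 2 with k
    simp only [inner_add_left, real_inner_smul_left]
    linear_combination (‖x k‖ ^ 2 / 2) * hab
  have hhull : convexHull ℝ M ⊆ T := convexHull_min hMT hTconv
  have hclos : closure (convexHull ℝ M) ⊆ T := by
    intro p hp
    have hpT : p ∈ closure T := closure_mono hhull hp
    -- show the sequence is Cauchy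
    have hCauchy : CauchySeq (fun k => ⟪p, x k⟫ - ‖x k‖ ^ 2 / 2) := by
      rw [Metric.cauchySeq_iff]
      intro ε hε
      obtain ⟨q, hqT, hq⟩ : ∃ q ∈ T, ‖p - q‖ < ε / (3 * (B + 1)) := by
        have hpos : (0:ℝ) < ε / (3 * (B + 1)) := by positivity
        obtain ⟨q, hqT, hq⟩ := Metric.mem_closure_iff.mp hpT _ hpos
        exact ⟨q, hqT, by rwa [dist_eq_norm] at hq⟩
      obtain ⟨t, ht⟩ := hqT
      have htc : CauchySeq (fun k => ⟪q, x k⟫ - ‖x k‖ ^ 2 / 2) := ht.cauchySeq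
      obtain ⟨N, hN⟩ := Metric.cauchySeq_iff.mp htc (ε / 3) (by positivity)
      refine ⟨N, fun m hm n hn => ?_⟩
      have hdiff : ∀ k, |(⟪p, x k⟫ - ‖x k‖ ^ 2 / 2) - (⟪q, x k⟫ - ‖x k‖ ^ 2 / 2)|
          < ε / 3 := by
        intro k
        have h1 : (⟪p, x k⟫ - ‖x k‖ ^ 2 / 2) - (⟪q, x k⟫ - ‖x k‖ ^ 2 / 2)
            = ⟪p - q, x k⟫ := by rw [inner_sub_left]; ring
        rw [h1]
        calc |⟪p - q, x k⟫| ≤ ‖p - q‖ * ‖x k‖ := abs_real_inner_le_norm _ _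
          _ ≤ ‖p - q‖ * (B + 1) := by
              have : ‖x k‖ ≤ B + 1 := le_trans (hB k) (by linarith)
              exact mul_le_mul_of_nonneg_left this (norm_nonneg _)
          _ < ε / (3 * (B + 1)) * (B + 1) := by
              apply mul_lt_mul_of_pos_right hq; linarith
          _ = ε / 3 := by field_simp
      have key := hN m hm n hn
      rw [Real.dist_eq] at key ⊢
      have d1 := hdiff m
      have d2 := hdiff n
      set am := ⟪p, x m⟫ - ‖x m‖ ^ 2 / 2
      set an := ⟪p, x n⟫ - ‖x n‖ ^ 2 / 2
      set bm := ⟪q, x m⟫ - ‖x m‖ ^ 2 / 2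
      set bn := ⟪q, x n⟫ - ‖x n‖ ^ 2 / 2
      have t1 : |am - an| ≤ |am - bm| + |bm - an| := abs_sub_le _ _ _
      have t2 : |bm - an| ≤ |bm - bn| + |bn - an| := abs_sub_le _ _ _
      have t3 : |bn - an| = |an - bn| := abs_sub_comm _ _
      rw [t3] at t2
      linarith
    obtain ⟨l, hl⟩ := cauchySeq_tendsto_of_complete hCauchy
    exact ⟨l, hl⟩
  intro p₁ hp₁ p₂ hp₂
  obtain ⟨l₁, hl₁⟩ := hclos hp₁
  obtain ⟨l₂, hl₂⟩ := hclos hp₂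
  refine ⟨l₁ - l₂, ?_⟩
  have h := hl₁.sub hl₂
  convert h using 2 with k
  rw [inner_sub_left]; ring
end

section
/- Let H be a real Hilbert space, M a nonempty subset of H, and (x_k) a sequence in H that is Fejér* monotone with respect to M. Suppose w' and w'' are weak cluster points of (x_k), i.e., there are strictly increasing index sequences (j_k) and (ℓ_k) such that x_{j_k} converges weakly to w' and x_{ℓ_k} converges weakly to w''. Then there exists α ∈ ℝ such that ⟨y, w' − w''⟩ = α for every y ∈ M. -/
open scoped RealInnerProductSpace

/-- `x` converges weakly to `w`: inner products with every vector converge. -/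
def WeakTendsto {H : Type*} [NormedAddCommGroup H] [InnerProductSpace ℝ H]
    (x : ℕ → H) (w : H) : Prop :=
  ∀ y : H, Filter.Tendsto (fun k => ⟪x k, y⟫) Filter.atTop (nhds ⟪w, y⟫)

/-- `w` is a weak cluster point of `x`: some subsequence converges weakly to `w`. -/
def IsWeakClusterPt {H : Type*} [NormedAddCommGroup H] [InnerProductSpace ℝ H]
    (x : ℕ → H) (w : H) : Prop :=
  ∃ φ : ℕ → ℕ, StrictMono φ ∧ WeakTendsto (x ∘ φ) w

/-- `w` is a strong cluster point of `x`: some subsequence converges to `w` in norm. -/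
def IsStrongClusterPt {H : Type*} [NormedAddCommGroup H] [InnerProductSpace ℝ H]
    (x : ℕ → H) (w : H) : Prop :=
  ∃ φ : ℕ → ℕ, StrictMono φ ∧ Filter.Tendsto (x ∘ φ) Filter.atTop (nhds w)

theorem fejerStar_weakClusterPts_hyperplane {H : Type*} [NormedAddCommGroup H]
    [InnerProductSpace ℝ H] [CompleteSpace H] (M : Set H) (hM : M.Nonempty) (x : ℕ → H)
    (hx : FejerStarMonotone x M) (w' w'' : H)
    (hw' : IsWeakClusterPt x w') (hw'' : IsWeakClusterPt x w'') :
    ∃ α : ℝ, ∀ y ∈ M, ⟪y, w' - w''⟫ = α := by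
  -- Step 1: for each p ∈ M, ‖x k - p‖ converges.
  have hconv : ∀ p ∈ M, ∃ L : ℝ,
      Filter.Tendsto (fun k => ‖x k - p‖) Filter.atTop (nhds L) := by
    intro p hp
    obtain ⟨N, hN⟩ := hx p hp
    set f : ℕ → ℝ := fun k => ‖x (k + N) - p‖ with hf
    have hanti : Antitone f := by
      apply antitone_nat_of_succ_le
      intro k
      have := hN (k + N) (Nat.le_add_left N k)
      simpa [hf, Nat.add_right_comm k N 1] using this
    have hbdd : BddBelow (Set.range f) := ⟨0, by rintro r ⟨k, rfl⟩; positivity⟩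
    refine ⟨⨅ k, f k, ?_⟩
    have := tendsto_atTop_ciInf hanti hbdd
    exact (Filter.tendsto_add_atTop_iff_nat N).mp this
  -- Step 2: for p q ∈ M, ⟪x k, q - p⟫ converges.
  have hip : ∀ p ∈ M, ∀ q ∈ M, ∃ c : ℝ,
      Filter.Tendsto (fun k => ⟪x k, q - p⟫) Filter.atTop (nhds c) := by
    intro p hp q hq
    obtain ⟨Lp, hLp⟩ := hconv p hp
    obtain ⟨Lq, hLq⟩ := hconv q hq
    refine ⟨(Lp ^ 2 - Lq ^ 2 - ‖p‖ ^ 2 + ‖q‖ ^ 2) / 2, ?_⟩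
    have key : ∀ a : H, ⟪a, q - p⟫ =
        (‖a - p‖ ^ 2 - ‖a - q‖ ^ 2 - ‖p‖ ^ 2 + ‖q‖ ^ 2) / 2 := by
      intro a
      have h1 : ‖a - p‖ ^ 2 = ‖a‖ ^ 2 - 2 * ⟪a, p⟫ + ‖p‖ ^ 2 := by
        rw [@norm_sub_sq_real]
      have h2 : ‖a - q‖ ^ 2 = ‖a‖ ^ 2 - 2 * ⟪a, q⟫ + ‖q‖ ^ 2 := by
        rw [@norm_sub_sq_real]
      have h3 : ⟪a, q - p⟫ = ⟪a, q⟫ - ⟪a, p⟫ := inner_sub_right a q p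
      rw [h3, h1, h2]; ring
    simp only [key]
    exact (((((hLp.pow 2).sub (hLq.pow 2)).sub tendsto_const_nhds).add
      tendsto_const_nhds).div_const 2)
  -- Step 3: weak cluster points give equal inner products.
  have heq : ∀ p ∈ M, ∀ q ∈ M, ⟪w', q - p⟫ = ⟪w'', q - p⟫ := by
    intro p hp q hq
    obtain ⟨c, hc⟩ := hip p hp q hq
    obtain ⟨φ, hφ, hwt⟩ := hw'
    obtain ⟨ψ, hψ, hwt'⟩ := hw''
    have h1 : ⟪w', q - p⟫ = c :=
      tendsto_nhds_unique (hwt (q - p)) (hc.comp hφ.tendsto_atTop)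
    have h2 : ⟪w'', q - p⟫ = c :=
      tendsto_nhds_unique (hwt' (q - p)) (hc.comp hψ.tendsto_atTop)
    rw [h1, h2]
  obtain ⟨p₀, hp₀⟩ := hM
  refine ⟨⟪p₀, w' - w''⟫, ?_⟩
  intro y hy
  have h := heq p₀ hp₀ y hy
  have : ⟪y - p₀, w' - w''⟫ = 0 := by
    rw [real_inner_comm, inner_sub_left]
    linarith [h]
  rw [inner_sub_left] at this
  linarith [this]
end

section
/- Let H be a real Hilbert space, M a nonempty subset of H whose affine span is dense in H, and (x_k) a sequence in H that is Fejér* monotone with respect to M. Then (x_k) converges weakly; that is, there exists w ∈ H such that ⟨x_k, y⟩ → ⟨w, y⟩ for every y ∈ H. -/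
open scoped RealInnerProductSpace

/-! Along each `p ∈ M` the distances `‖x k - p‖` are eventually nonincreasing, hence convergent;
so `x` is bounded and, by polarization, `⟪x k, q - p⟫` converges for all `p q ∈ M`. The vectors `y`
for which `⟪x k, y⟫` converges form a subspace, which is closed because the functionals `⟪x k, ·⟫`
are uniformly Lipschitz, and which contains the dense direction of the affine span of `M`; so it is
all of `H`. By Banach–Steinhaus the pointwise limit is a continuous functional, and by Riesz it is
`⟪w, ·⟫` for some `w`. -/

open Filter Topology Set

lemma exists_tendsto_of_eventually_antitone {f : ℕ → ℝ} {N : ℕ} (hf : ∀ k ≥ N, f (k + 1) ≤ f k)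
    (hbdd : BddBelow (range f)) : ∃ ℓ, Tendsto f atTop (𝓝 ℓ) := by
  have hanti : Antitone fun k => f (k + N) :=
    antitone_nat_of_succ_le fun k => by
      simpa only [Nat.add_right_comm] using hf (k + N) (Nat.le_add_left _ _)
  have hbdd' : BddBelow (range fun k => f (k + N)) :=
    hbdd.mono (range_comp_subset_range (· + N) f)
  exact ⟨_, (tendsto_add_atTop_iff_nat N).mp (tendsto_atTop_ciInf hanti hbdd')⟩

theorem Equicontinuous.isClosed_setOf_cauchySeq {X α : Type*} [TopologicalSpace X]
    [UniformSpace α] {F : ℕ → X → α} (hF : Equicontinuous F) :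
    IsClosed {y | CauchySeq (F · y)} := by
  refine closure_subset_iff_isClosed.mp fun y hy => cauchySeq_iff.mpr fun U hU => ?_
  obtain ⟨V, hV, hVsymm, hVU⟩ := comp_comp_symm_mem_uniformity_sets hU
  obtain ⟨z, hFz, hz⟩ := mem_closure_iff_nhds.mp hy _ (hF y V hV)
  obtain ⟨N, hN⟩ := cauchySeq_iff.mp hz V hV
  exact ⟨N, fun k hk l hl => hVU ⟨F l z, ⟨F k z, hFz k, hN k hk l hl⟩, hVsymm.symm _ _ (hFz l)⟩⟩

lemma two_mul_inner_sub_right_eq {H : Type*} [NormedAddCommGroup H] [InnerProductSpace ℝ H]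
    (x p q : H) : 2 * ⟪x, q - p⟫ = ‖x - p‖ ^ 2 - ‖x - q‖ ^ 2 + ‖q‖ ^ 2 - ‖p‖ ^ 2 := by
  rw [inner_sub_right, norm_sub_sq_real, norm_sub_sq_real]
  ring

theorem dense_vectorSpan_of_dense_affineSpan {k E : Type*} [Ring k] [AddCommGroup E] [Module k E]
    [TopologicalSpace E] [IsTopologicalAddGroup E] {s : Set E}
    (hs : Dense (affineSpan k s : Set E)) : Dense (vectorSpan k s : Set E) := by
  obtain ⟨p, hp⟩ := hs.nonempty
  rw [← direction_affineSpan, AffineSubspace.coe_direction_eq_vsub_set_right hp]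
  exact (Homeomorph.subRight p).surjective.denseRange.dense_image (continuous_sub_right p) hs

section
variable {H : Type*} [NormedAddCommGroup H] [InnerProductSpace ℝ H]

def convergentInnerSubmodule (x : ℕ → H) : Submodule ℝ H where
  carrier := {y | ∃ c, Tendsto (fun k => ⟪x k, y⟫) atTop (𝓝 c)}
  add_mem' := by
    rintro y z ⟨c, hc⟩ ⟨d, hd⟩
    exact ⟨c + d, by simpa only [inner_add_right] using hc.add hd⟩
  zero_mem' := ⟨0, by simp only [inner_zero_right, tendsto_const_nhds]⟩
  smul_mem' := by
    rintro a y ⟨c, hc⟩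
    exact ⟨a * c, by simpa only [inner_smul_right] using hc.const_mul a⟩

theorem isClosed_convergentInnerSubmodule {x : ℕ → H} (hx : Bornology.IsBounded (range x)) :
    IsClosed (convergentInnerSubmodule x : Set H) := by
  obtain ⟨C, hC⟩ := isBounded_iff_forall_norm_le.mp hx
  have hlip : ∀ k, LipschitzWith C.toNNReal (innerSL ℝ (x k)) := fun k =>
    (innerSL ℝ (x k)).lipschitz.weaken <| by
      rw [← NNReal.coe_le_coe, coe_nnnorm, innerSL_apply_norm]
      exact (hC _ (mem_range_self k)).trans (Real.le_coe_toNNReal C)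
  convert (LipschitzWith.uniformEquicontinuous _ _ hlip).equicontinuous.isClosed_setOf_cauchySeq
    using 1
  exact Set.ext fun y => cauchy_map_iff_exists_tendsto.symm

theorem exists_weakTendsto_of_convergentInnerSubmodule_eq_top [CompleteSpace H] {x : ℕ → H}
    (hx : convergentInnerSubmodule x = ⊤) : ∃ w : H, WeakTendsto x w := by
  choose c hc using fun y => (Submodule.eq_top_iff'.mp hx y)
  let ℓ : H →L[ℝ] ℝ :=
    continuousLinearMapOfTendsto (fun k => innerSL ℝ (x k)) (tendsto_pi_nhds.mpr hc)
  refine ⟨(InnerProductSpace.toDual ℝ H).symm ℓ, fun y => ?_⟩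
  rw [InnerProductSpace.toDual_symm_apply]
  exact hc y

end

namespace FejerStarMonotone

variable {H : Type*} [NormedAddCommGroup H] [InnerProductSpace ℝ H] {x : ℕ → H} {M : Set H}

theorem exists_tendsto_norm_sub (hx : FejerStarMonotone x M) {p : H} (hp : p ∈ M) :
    ∃ ℓ, Tendsto (fun k => ‖x k - p‖) atTop (𝓝 ℓ) := by
  obtain ⟨N, hN⟩ := hx p hp
  exact exists_tendsto_of_eventually_antitone hN ⟨0, by rintro _ ⟨k, rfl⟩; exact norm_nonneg _⟩

theorem isBounded_range (hx : FejerStarMonotone x M) (hM : M.Nonempty) :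
    Bornology.IsBounded (range x) := by
  obtain ⟨p, hp⟩ := hM
  obtain ⟨ℓ, hℓ⟩ := hx.exists_tendsto_norm_sub hp
  obtain ⟨C, hC⟩ := hℓ.bddAbove_range
  refine (Metric.isBounded_closedBall (x := p) (r := C)).subset ?_
  rintro _ ⟨k, rfl⟩
  exact mem_closedBall_iff_norm.mpr (hC (mem_range_self k))

theorem vectorSpan_le_convergentInnerSubmodule (hx : FejerStarMonotone x M) :
    vectorSpan ℝ M ≤ convergentInnerSubmodule x := by
  rw [vectorSpan_def, Submodule.span_le]
  rintro _ ⟨q, hq, p, hp, rfl⟩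
  show ∃ c, Tendsto (fun k => ⟪x k, q - p⟫) atTop (𝓝 c)
  obtain ⟨ℓp, hℓp⟩ := hx.exists_tendsto_norm_sub hp
  obtain ⟨ℓq, hℓq⟩ := hx.exists_tendsto_norm_sub hq
  refine ⟨(ℓp ^ 2 - ℓq ^ 2 + ‖q‖ ^ 2 - ‖p‖ ^ 2) / 2, ?_⟩
  have h := ((((hℓp.pow 2).sub (hℓq.pow 2)).add_const (‖q‖ ^ 2)).sub_const (‖p‖ ^ 2)).div_const 2
  convert h using 2 with k
  rw [← two_mul_inner_sub_right_eq]
  ring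

end FejerStarMonotone

theorem fejerStar_weak_convergence_of_denseAffineSpan_general {H : Type*} [NormedAddCommGroup H]
    [InnerProductSpace ℝ H] [CompleteSpace H] (M : Set H) (x : ℕ → H)
    (hx : FejerStarMonotone x M)
    (hdense : closure (affineSpan ℝ M : Set H) = Set.univ) :
    ∃ w : H, WeakTendsto x w := by
  have hspan : Dense (affineSpan ℝ M : Set H) := dense_iff_closure_eq.mpr hdense
  have hM : M.Nonempty := (affineSpan_nonempty ℝ).mp hspan.nonempty
  refine exists_weakTendsto_of_convergentInnerSubmodule_eq_top ?_
  have hconvDense : Dense (convergentInnerSubmodule x : Set H) :=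
    (dense_vectorSpan_of_dense_affineSpan hspan).mono hx.vectorSpan_le_convergentInnerSubmodule
  refine SetLike.coe_injective ?_
  rw [Submodule.top_coe, ← hconvDense.closure_eq,
    (isClosed_convergentInnerSubmodule (hx.isBounded_range hM)).closure_eq]

theorem fejerStar_weak_convergence_of_denseAffineSpan {H : Type*} [NormedAddCommGroup H]
    [InnerProductSpace ℝ H] [CompleteSpace H] (M : Set H) (hM : M.Nonempty) (x : ℕ → H)
    (hx : FejerStarMonotone x M)
    (hdense : closure (affineSpan ℝ M : Set H) = Set.univ) :
    ∃ w : H, WeakTendsto x w :=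
  fejerStar_weak_convergence_of_denseAffineSpan_general M x hx hdense
end

section
/- Let H be a real Hilbert space, M a nonempty subset of H, and (x_k) a sequence in H that is Fejér* monotone with respect to M. Suppose (x_k) converges weakly to a point x̄ belonging to the closure of the convex hull of M (i.e., ⟨x_k, y⟩ → ⟨x̄, y⟩ for every y ∈ H). Then for every y ∈ H the scalar sequence (‖x_k − y‖) converges (i.e., has a limit in ℝ). -/
open scoped RealInnerProductSpace

theorem fejerStar_dist_converges_of_weak_limit {H : Type*} [NormedAddCommGroup H]
    [InnerProductSpace ℝ H] [CompleteSpace H] (M : Set H) (hM : M.Nonempty) (x : ℕ → H)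
    (hx : FejerStarMonotone x M) (xbar : H)
    (hxbar : xbar ∈ closure (convexHull ℝ M)) (hweak : WeakTendsto x xbar) :
    ∀ y : H, ∃ l : ℝ, Filter.Tendsto (fun k => ‖x k - y‖) Filter.atTop (nhds l) := by
  obtain ⟨p, hp⟩ := hM
  obtain ⟨N, hN⟩ := hx p hp
  -- the shifted distance sequence is antitone and bounded below, hence converges
  have hanti : Antitone (fun k => ‖x (k + N) - p‖) := by
    apply antitone_nat_of_succ_le
    intro k
    have := hN (k + N) (Nat.le_add_left N k)
    simpa [Nat.add_right_comm] using this
  have hbdd : BddBelow (Set.range fun k => ‖x (k + N) - p‖) :=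
    ⟨0, by rintro r ⟨k, rfl⟩; positivity⟩
  set d : ℝ := ⨅ k, ‖x (k + N) - p‖ with hd
  have hshift : Filter.Tendsto (fun k => ‖x (k + N) - p‖) Filter.atTop (nhds d) :=
    tendsto_atTop_ciInf hanti hbdd
  have hdp : Filter.Tendsto (fun k => ‖x k - p‖) Filter.atTop (nhds d) :=
    (Filter.tendsto_add_atTop_iff_nat N).mp hshift
  intro y
  -- expansion: ‖x k - y‖² = ‖x k - p‖² + 2⟪x k - p, p - y⟫ + ‖p - y‖²
  have hexp : ∀ k, ‖x k - y‖ ^ 2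
      = ‖x k - p‖ ^ 2 + 2 * (⟪x k, p - y⟫ - ⟪p, p - y⟫) + ‖p - y‖ ^ 2 := by
    intro k
    have h1 : x k - y = (x k - p) + (p - y) := by abel
    rw [h1, norm_add_sq_real, inner_sub_left]
  set L : ℝ := d ^ 2 + 2 * (⟪xbar, p - y⟫ - ⟪p, p - y⟫) + ‖p - y‖ ^ 2 with hL
  have hsq : Filter.Tendsto (fun k => ‖x k - y‖ ^ 2) Filter.atTop (nhds L) := by
    simp only [hexp]
    exact (((hdp.pow 2).add
      ((((hweak (p - y)).sub tendsto_const_nhds).const_mul 2))).add tendsto_const_nhds)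
  have hL0 : 0 ≤ L :=
    le_of_tendsto_of_tendsto' tendsto_const_nhds hsq (fun k => by positivity)
  refine ⟨Real.sqrt L, ?_⟩
  have := (Real.continuous_sqrt.continuousAt.tendsto.comp hsq)
  convert this using 2 with k
  · exact (Real.sqrt_sq (norm_nonneg _)).symm
end

section
/- Let H be a real Hilbert space, M a nonempty subset of H, and (x_k) a sequence in H that is Fejér* monotone with respect to M. Then (x_k) converges weakly to a point of M if and only if every weak cluster point of (x_k) belongs to M. (Here 'converges weakly to w' means ⟨x_k, y⟩ → ⟨w, y⟩ for every y ∈ H, and a weak cluster point is the weak limit of some subsequence.) -/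
open scoped RealInnerProductSpace

open Filter in

/-- Bounded sequences in a real Hilbert space have weakly convergent subsequences. -/
lemma weak_seq_compact {H : Type*} [NormedAddCommGroup H] [InnerProductSpace ℝ H]
    [CompleteSpace H] (x : ℕ → H) (C : ℝ) (hb : ∀ k, ‖x k‖ ≤ C) :
    ∃ (w : H) (φ : ℕ → ℕ), StrictMono φ ∧
      ∀ y : H, Tendsto (fun k => ⟪x (φ k), y⟫) atTop (nhds ⟪w, y⟫) := by
  have hC : 0 ≤ C := le_trans (norm_nonneg _) (hb 0)
  -- Diagonal extraction via compactness of a product of intervals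
  set g : ℕ → ℕ → ℝ := fun k j => ⟪x k, x j⟫ with hg
  have hmem : ∀ k, g k ∈ Set.univ.pi fun j => Set.Icc (-(C * ‖x j‖)) (C * ‖x j‖) := by
    intro k j _
    rw [Set.mem_Icc, ← abs_le]
    exact (abs_real_inner_le_norm _ _).trans
      (mul_le_mul_of_nonneg_right (hb k) (norm_nonneg _))
  obtain ⟨L, -, φ, hφ, hLconv⟩ :=
    (isCompact_univ_pi fun j => isCompact_Icc).tendsto_subseq hmem
  rw [tendsto_pi_nhds] at hLconv
  have h1 : ∀ j, Tendsto (fun k => ⟪x (φ k), x j⟫) atTop (nhds (L j)) := fun j => hLconv j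
  -- convergence on the span of the range of x
  have hspan : ∀ z ∈ Submodule.span ℝ (Set.range x),
      ∃ l, Tendsto (fun k => ⟪x (φ k), z⟫) atTop (nhds l) := by
    intro z hz
    induction hz using Submodule.span_induction with
    | mem z hz =>
        obtain ⟨j, rfl⟩ := hz
        exact ⟨L j, h1 j⟩
    | zero => exact ⟨0, by simpa using tendsto_const_nhds⟩
    | add a b _ _ iha ihb =>
        obtain ⟨la, hla⟩ := iha
        obtain ⟨lb, hlb⟩ := ihb
        exact ⟨la + lb, by simpa [inner_add_right] using hla.add hlb⟩
    | smul c a _ iha =>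
        obtain ⟨la, hla⟩ := iha
        exact ⟨c * la, by simpa [real_inner_smul_right] using hla.const_mul c⟩
  -- convergence on all of H
  have hall : ∀ y : H, ∃ l, Tendsto (fun k => ⟪x (φ k), y⟫) atTop (nhds l) := by
    intro y
    set K := (Submodule.span ℝ (Set.range x)).topologicalClosure with hK
    obtain ⟨a, ha, b, hbmem, rfl⟩ := K.exists_add_mem_mem_orthogonal y
    have hxK : ∀ k, x k ∈ K :=
      fun k => Submodule.le_topologicalClosure _ (Submodule.subset_span ⟨k, rfl⟩)
    have hbz : ∀ k, ⟪x (φ k), b⟫ = 0 := fun k =>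
      (Submodule.mem_orthogonal K b).mp hbmem _ (hxK (φ k))
    -- convergence at a : Cauchy via density of the span in K
    have hcauchy : CauchySeq fun k => ⟪x (φ k), a⟫ := by
      rw [Metric.cauchySeq_iff]
      intro ε hε
      have hε3 : 0 < ε / 3 := by linarith
      have hε' : 0 < ε / (3 * (C + 1)) := by positivity
      have haclos : a ∈ closure ((Submodule.span ℝ (Set.range x) : Submodule ℝ H) : Set H) := ha
      obtain ⟨z, hzmem, hzd⟩ := Metric.mem_closure_iff.mp haclos _ hε'
      obtain ⟨l, hl⟩ := hspan z hzmem
      obtain ⟨N, hN⟩ := (Metric.cauchySeq_iff.mp hl.cauchySeq) (ε / 3) hε3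
      refine ⟨N, fun m hm n hn => ?_⟩
      have key : ∀ k, |⟪x (φ k), a⟫ - ⟪x (φ k), z⟫| ≤ ε / 3 := by
        intro k
        rw [← inner_sub_right]
        refine (abs_real_inner_le_norm _ _).trans ?_
        have h2 : ‖x (φ k)‖ * ‖a - z‖ ≤ C * (ε / (3 * (C + 1))) := by
          apply mul_le_mul (hb _) _ (norm_nonneg _) hC
          rw [← dist_eq_norm]
          exact hzd.le
        refine h2.trans ?_
        rw [mul_div_assoc', div_le_div_iff₀ (by positivity) (by norm_num : (0:ℝ) < 3)]
        nlinarith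
      have hd := hN m hm n hn
      rw [Real.dist_eq] at hd ⊢
      calc |⟪x (φ m), a⟫ - ⟪x (φ n), a⟫|
          ≤ |⟪x (φ m), a⟫ - ⟪x (φ m), z⟫| + |⟪x (φ m), z⟫ - ⟪x (φ n), z⟫|
            + |⟪x (φ n), z⟫ - ⟪x (φ n), a⟫| := by
            have := abs_sub_le (⟪x (φ m), a⟫) (⟪x (φ m), z⟫) (⟪x (φ n), a⟫)
            have := abs_sub_le (⟪x (φ m), z⟫) (⟪x (φ n), z⟫) (⟪x (φ n), a⟫)
            linarith [abs_sub_le (⟪x (φ m), a⟫) (⟪x (φ m), z⟫) (⟪x (φ n), a⟫),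
              abs_sub_le (⟪x (φ m), z⟫) (⟪x (φ n), z⟫) (⟪x (φ n), a⟫)]
        _ < ε := by
            have h3 := key m
            have h4 : |⟪x (φ n), z⟫ - ⟪x (φ n), a⟫| ≤ ε / 3 := by
              rw [abs_sub_comm]; exact key n
            linarith
    obtain ⟨l, hl⟩ := cauchySeq_tendsto_of_complete hcauchy
    exact ⟨l, by simpa [inner_add_right, hbz] using hl⟩
  choose l hl using hall
  -- the limit functional is linear and bounded; Riesz representation
  have hadd : ∀ y z : H, l (y + z) = l y + l z := by
    intro y z
    refine tendsto_nhds_unique (hl (y + z)) ?_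
    simpa [inner_add_right] using (hl y).add (hl z)
  have hsmul : ∀ (c : ℝ) (y : H), l (c • y) = c * l y := by
    intro c y
    refine tendsto_nhds_unique (hl (c • y)) ?_
    simpa [real_inner_smul_right] using (hl y).const_mul c
  have hbound : ∀ y : H, |l y| ≤ C * ‖y‖ := by
    intro y
    have : Tendsto (fun k => |⟪x (φ k), y⟫|) atTop (nhds |l y|) := (hl y).abs
    refine le_of_tendsto this (Eventually.of_forall fun k => ?_)
    exact (abs_real_inner_le_norm _ _).trans
      (mul_le_mul_of_nonneg_right (hb _) (norm_nonneg _))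
  let F : H →L[ℝ] ℝ :=
    LinearMap.mkContinuous ⟨⟨l, fun y z => hadd y z⟩, fun c y => by simpa using hsmul c y⟩ C
      fun y => by simpa [Real.norm_eq_abs] using hbound y
  refine ⟨(InnerProductSpace.toDual ℝ H).symm F, φ, hφ, fun y => ?_⟩
  have : ⟪(InnerProductSpace.toDual ℝ H).symm F, y⟫ = F y := by
    rw [← InnerProductSpace.toDual_apply_apply, LinearIsometryEquiv.apply_symm_apply]
  rw [this]
  exact hl y

section Rest
variable {H : Type*} [NormedAddCommGroup H] [InnerProductSpace ℝ H]
open Filter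
variable {H : Type*} [NormedAddCommGroup H] [InnerProductSpace ℝ H]

/-- Eventual monotonicity of distances gives convergence of the distance sequence. -/
lemma dist_tendsto_of_eventually_antitone (x : ℕ → H) (p : H) (N : ℕ)
    (hN : ∀ k ≥ N, ‖x (k + 1) - p‖ ≤ ‖x k - p‖) :
    ∃ d : ℝ, Tendsto (fun k => ‖x k - p‖) atTop (nhds d) := by
  set y : ℕ → ℝ := fun k => ‖x (k + N) - p‖ with hy
  have hanti : Antitone y := antitone_nat_of_succ_le fun k => by
    have := hN (k + N) (Nat.le_add_left _ _)
    simpa [hy, Nat.add_right_comm] using this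
  have hbdd : BddBelow (Set.range y) := ⟨0, fun r ⟨k, hk⟩ => hk ▸ norm_nonneg _⟩
  refine ⟨⨅ k, y k, ?_⟩
  have := tendsto_atTop_ciInf hanti hbdd
  rwa [← tendsto_add_atTop_iff_nat N]

/-- The inner products with a fixed difference of points of `M` converge. -/
lemma fejer_bounded (x : ℕ → H) (p : H) (N : ℕ)
    (hN : ∀ k ≥ N, ‖x (k + 1) - p‖ ≤ ‖x k - p‖) :
    ∃ C : ℝ, ∀ k, ‖x k‖ ≤ C := by
  have hmono : ∀ k ≥ N, ‖x k - p‖ ≤ ‖x N - p‖ := by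
    intro k hk
    induction k with
    | zero => simpa [Nat.le_zero.mp hk] using le_refl _
    | succ n ih =>
        rcases Nat.lt_or_ge N (n + 1) with h | h
        · have hn : n ≥ N := Nat.lt_succ_iff.mp h
          exact (hN n hn).trans (ih hn)
        · have : N = n + 1 := le_antisymm hk h
          simp [this]
  classical
  obtain ⟨C0, hC0⟩ : ∃ C0 : ℝ, ∀ i ≤ N, ‖x i - p‖ ≤ C0 := by
    have hne : (Finset.range (N + 1)).Nonempty := Finset.nonempty_range_iff.mpr (Nat.succ_ne_zero N)
    refine ⟨Finset.sup' (Finset.range (N + 1)) hne (fun i => ‖x i - p‖), fun i hi => ?_⟩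
    exact Finset.le_sup' (fun i => ‖x i - p‖) (Finset.mem_range.mpr (Nat.lt_succ_of_le hi))
  refine ⟨C0 + ‖p‖, fun k => ?_⟩
  have h1 : ‖x k - p‖ ≤ C0 := by
    rcases le_or_gt k N with h | h
    · exact hC0 k h
    · exact (hmono k h.le).trans (hC0 N le_rfl)
  calc ‖x k‖ = ‖x k - p + p‖ := by rw [sub_add_cancel]
    _ ≤ ‖x k - p‖ + ‖p‖ := norm_add_le _ _
    _ ≤ C0 + ‖p‖ := by linarith

end Rest

theorem fejerStar_weak_convergence_iff {H : Type*} [NormedAddCommGroup H]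
    [InnerProductSpace ℝ H] [CompleteSpace H] (M : Set H) (hM : M.Nonempty) (x : ℕ → H)
    (hx : FejerStarMonotone x M) :
    (∃ w ∈ M, WeakTendsto x w) ↔ (∀ w : H, IsWeakClusterPt x w → w ∈ M) := by
  open Filter in
  constructor
  · rintro ⟨w, hwM, hw⟩ u ⟨φ, hφ, hu⟩
    have huw : u = w := by
      have h0 : ⟪u - w, u - w⟫ = 0 := by
        have hy : ∀ y : H, ⟪u, y⟫ = ⟪w, y⟫ := fun y =>
          tendsto_nhds_unique (hu y) ((hw y).comp hφ.tendsto_atTop)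
        rw [inner_sub_left, hy (u - w)]
        ring
      rw [inner_self_eq_zero, sub_eq_zero] at h0
      exact h0
    exact huw ▸ hwM
  · intro hclus
    obtain ⟨p, hp⟩ := hM
    obtain ⟨N, hN⟩ := hx p hp
    obtain ⟨C, hC⟩ := fejer_bounded x p N hN
    obtain ⟨w, φ, hφ, hwconv⟩ := weak_seq_compact x C hC
    have hwcl : IsWeakClusterPt x w := ⟨φ, hφ, hwconv⟩
    have hwM : w ∈ M := hclus w hwcl
    -- any two weak cluster points lying in M coincide
    have key : ∀ u v : H, IsWeakClusterPt x u → IsWeakClusterPt x v →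
        u ∈ M → v ∈ M → u = v := by
      rintro u v ⟨φu, hφu, hu⟩ ⟨φv, hφv, hv⟩ huM hvM
      obtain ⟨Nu, hNu⟩ := hx u huM
      obtain ⟨Nv, hNv⟩ := hx v hvM
      obtain ⟨a, hda⟩ := dist_tendsto_of_eventually_antitone x u Nu hNu
      obtain ⟨b, hdb⟩ := dist_tendsto_of_eventually_antitone x v Nv hNv
      set c : ℝ := (b ^ 2 - a ^ 2 - ‖v‖ ^ 2 + ‖u‖ ^ 2) / 2 with hc
      have ht : Tendsto (fun k => ⟪x k, u - v⟫) atTop (nhds c) := by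
        have heq : ∀ k, ⟪x k, u - v⟫
            = (‖x k - v‖ ^ 2 - ‖x k - u‖ ^ 2 - ‖v‖ ^ 2 + ‖u‖ ^ 2) / 2 := by
          intro k
          have h1 := norm_sub_sq_real (x k) u
          have h2 := norm_sub_sq_real (x k) v
          rw [inner_sub_right]
          linarith
        simp_rw [heq]
        exact ((((hdb.pow 2).sub (hda.pow 2)).sub_const (‖v‖ ^ 2)).add_const
          (‖u‖ ^ 2)).div_const 2
      have hcu : ⟪u, u - v⟫ = c :=
        tendsto_nhds_unique (hu (u - v)) (ht.comp hφu.tendsto_atTop)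
      have hcv : ⟪v, u - v⟫ = c :=
        tendsto_nhds_unique (hv (u - v)) (ht.comp hφv.tendsto_atTop)
      have h0 : ⟪u - v, u - v⟫ = 0 := by
        rw [inner_sub_left, hcu, hcv]; ring
      rw [inner_self_eq_zero, sub_eq_zero] at h0
      exact h0
    refine ⟨w, hwM, fun y => ?_⟩
    apply tendsto_of_subseq_tendsto
    intro ns hns
    obtain ⟨σ, hσ, hσns⟩ := strictMono_subseq_of_tendsto_atTop hns
    obtain ⟨w', ψ, hψ, hw'⟩ := weak_seq_compact (fun k => x (ns (σ k))) C fun k => hC _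
    have hclw' : IsWeakClusterPt x w' :=
      ⟨(ns ∘ σ) ∘ ψ, hσns.comp hψ, fun z => hw' z⟩
    have hww : w' = w := key w' w hclw' hwcl (hclus w' hclw') hwM
    exact ⟨σ ∘ ψ, by simpa [Function.comp, hww] using hw' y⟩
end

section
/- Let H be a real Hilbert space, M a nonempty subset of H, and (x_k) a sequence in H that is Fejér* monotone with respect to M. Suppose w' and w'' are strong cluster points of (x_k), i.e., limits (in norm) of subsequences of (x_k). Then for every y ∈ M one has ⟨y − (w' + w'')/2, w' − w''⟩ = 0. -/
open scoped RealInnerProductSpace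

theorem fejerStar_strongClusterPts_orthogonal {H : Type*} [NormedAddCommGroup H]
    [InnerProductSpace ℝ H] [CompleteSpace H] (M : Set H) (hM : M.Nonempty) (x : ℕ → H)
    (hx : FejerStarMonotone x M) (w' w'' : H)
    (hw' : IsStrongClusterPt x w') (hw'' : IsStrongClusterPt x w'') :
    ∀ y ∈ M, ⟪y - (2 : ℝ)⁻¹ • (w' + w''), w' - w''⟫ = 0 := by
  intro y hy
  obtain ⟨N, hN⟩ := hx y hy
  set a : ℕ → ℝ := fun k => ‖x (k + N) - y‖ with ha
  have h_anti : Antitone a := antitone_nat_of_succ_le fun k => by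
    have := hN (k + N) (Nat.le_add_left _ _)
    simpa [ha, Nat.succ_add, Nat.add_right_comm] using this
  have h_bdd : BddBelow (Set.range a) := ⟨0, fun r ⟨k, hk⟩ => hk ▸ norm_nonneg _⟩
  have hconv : Filter.Tendsto a Filter.atTop (nhds (⨅ i, a i)) :=
    tendsto_atTop_ciInf h_anti h_bdd
  set L := ⨅ i, a i
  have hfull : Filter.Tendsto (fun k => ‖x k - y‖) Filter.atTop (nhds L) := by
    rw [← Filter.tendsto_add_atTop_iff_nat N]
    exact hconv
  have key : ∀ w : H, IsStrongClusterPt x w → ‖w - y‖ = L := by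
    rintro w ⟨φ, hφ, hlim⟩
    have h1 : Filter.Tendsto (fun k => ‖x (φ k) - y‖) Filter.atTop (nhds ‖w - y‖) :=
      ((continuous_norm.comp (continuous_id.sub continuous_const)).continuousAt).tendsto.comp hlim
    have h2 : Filter.Tendsto (fun k => ‖x (φ k) - y‖) Filter.atTop (nhds L) :=
      hfull.comp hφ.tendsto_atTop
    exact tendsto_nhds_unique h1 h2
  have heq : ‖w' - y‖ = ‖w'' - y‖ := (key w' hw').trans (key w'' hw'').symm
  have inner_key : ∀ u v : H, ⟪u + v, u - v⟫ = ‖u‖ ^ 2 - ‖v‖ ^ 2 := by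
    intro u v
    simp only [inner_add_left, inner_sub_right, real_inner_self_eq_norm_sq,
      real_inner_comm u v]
    ring
  have hrw1 : y - (2 : ℝ)⁻¹ • (w' + w'') = -((2:ℝ)⁻¹) • ((w' - y) + (w'' - y)) := by
    module
  have hrw2 : w' - w'' = (w' - y) - (w'' - y) := by abel
  rw [hrw1, hrw2, real_inner_smul_left, inner_key]
  rw [heq]
  ring
end

section
/- Let H be a real Hilbert space, M a nonempty subset of H whose affine span is dense in H, and (x_k) a sequence in H that is Fejér* monotone with respect to M. Then (x_k) has at most one strong cluster point: if w' and w'' are each limits in norm of subsequences of (x_k), then w' = w''. -/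
open scoped RealInnerProductSpace

theorem fejerStar_strongClusterPt_unique {H : Type*} [NormedAddCommGroup H]
    [InnerProductSpace ℝ H] [CompleteSpace H] (M : Set H) (hM : M.Nonempty) (x : ℕ → H)
    (hx : FejerStarMonotone x M)
    (hdense : closure (affineSpan ℝ M : Set H) = Set.univ) (w' w'' : H)
    (hw' : IsStrongClusterPt x w') (hw'' : IsStrongClusterPt x w'') :
    w' = w'' := by
  obtain ⟨φ, hφ, hφw⟩ := hw'
  obtain ⟨ψ, hψ, hψw⟩ := hw''
  -- Step 1: distances to each p ∈ M from w' and w'' coincide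
  have key : ∀ p ∈ M, ‖w' - p‖ = ‖w'' - p‖ := by
    intro p hp
    obtain ⟨N, hN⟩ := hx p hp
    set f : ℕ → ℝ := fun k => ‖x k - p‖ with hf
    have hanti : Antitone (fun k => f (k + N)) := by
      apply antitone_nat_of_succ_le
      intro k
      have := hN (k + N) (Nat.le_add_left _ _)
      simpa [hf, add_right_comm] using this
    have hbdd : BddBelow (Set.range (fun k => f (k + N))) :=
      ⟨0, by rintro r ⟨k, rfl⟩; positivity⟩
    have hlim : Filter.Tendsto f Filter.atTop (nhds (⨅ k, f (k + N))) := by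
      have h := tendsto_atTop_ciInf hanti hbdd
      exact (Filter.tendsto_add_atTop_iff_nat N).mp h
    have h1 : Filter.Tendsto (fun k => f (φ k)) Filter.atTop (nhds (‖w' - p‖)) :=
      ((hφw.sub tendsto_const_nhds).norm :)
    have h1' : Filter.Tendsto (fun k => f (φ k)) Filter.atTop (nhds (⨅ k, f (k + N))) :=
      hlim.comp hφ.tendsto_atTop
    have h2 : Filter.Tendsto (fun k => f (ψ k)) Filter.atTop (nhds (‖w'' - p‖)) :=
      ((hψw.sub tendsto_const_nhds).norm :)
    have h2' : Filter.Tendsto (fun k => f (ψ k)) Filter.atTop (nhds (⨅ k, f (k + N))) :=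
      hlim.comp hψ.tendsto_atTop
    rw [tendsto_nhds_unique h1 h1', tendsto_nhds_unique h2 h2']
  -- Step 2: the inner product of u := w' - w'' with points of M is constant
  set u : H := w' - w'' with hu_def
  set c : ℝ := (‖w'‖ ^ 2 - ‖w''‖ ^ 2) / 2 with hc_def
  have hinner : ∀ p ∈ M, ⟪u, p⟫ = c := by
    intro p hp
    have h := key p hp
    have h2 : ‖w' - p‖ ^ 2 = ‖w'' - p‖ ^ 2 := by rw [h]
    rw [norm_sub_sq_real, norm_sub_sq_real] at h2
    have h3 : ⟪w', p⟫ - ⟪w'', p⟫ = (‖w'‖ ^ 2 - ‖w''‖ ^ 2) / 2 := by linarith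
    simpa [hu_def, hc_def, inner_sub_left] using h3
  -- The set where ⟪u, ·⟫ = c is an affine subspace containing M
  let T : AffineSubspace ℝ H :=
    { carrier := {v | ⟪u, v⟫ = c}
      smul_vsub_vadd_mem' := by
        intro t p1 p2 p3 h1 h2 h3
        simp only [Set.mem_setOf_eq] at *
        simp [vsub_eq_sub, vadd_eq_add, inner_add_right, inner_smul_right,
          inner_sub_right, h1, h2, h3] }
  have hspan : (affineSpan ℝ M : Set H) ⊆ {v | ⟪u, v⟫ = c} := by
    have hle : affineSpan ℝ M ≤ T := affineSpan_le.mpr (fun p hp => hinner p hp)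
    exact hle
  have hclosed : IsClosed {v : H | ⟪u, v⟫ = c} :=
    isClosed_eq (Continuous.inner continuous_const continuous_id) continuous_const
  have hall : ∀ v : H, ⟪u, v⟫ = c := by
    intro v
    have hv : v ∈ closure (affineSpan ℝ M : Set H) := by rw [hdense]; trivial
    exact hclosed.closure_subset_iff.mpr hspan hv
  have h0 : c = 0 := by
    have := hall 0
    simpa using this.symm
  have hu : u = 0 := by
    have := hall u
    rw [h0] at this
    exact inner_self_eq_zero.mp this
  exact sub_eq_zero.mp hu
end

section
/- Let H be a real Hilbert space, M a nonempty subset of H, and (x_k) a sequence in H that is Fejér* monotone with respect to M. Suppose there exist x ∈ M, a sequence (ε_k) of nonnegative real numbers with ∑_k ε_k < ∞, and ρ > 0 such that ‖x_{k+1} − x‖² ≤ ‖x_k − x‖² − ρ‖x_{k+1} − x_k‖ + ε_k for all k ∈ ℕ. Then (x_k) converges strongly (in norm) to some point of H. -/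
open scoped RealInnerProductSpace

theorem fejerStar_strong_convergence_of_rho {H : Type*} [NormedAddCommGroup H]
    [InnerProductSpace ℝ H] [CompleteSpace H] (M : Set H) (hM : M.Nonempty) (x : ℕ → H)
    (hx : FejerStarMonotone x M) (p : H) (hp : p ∈ M) (ε : ℕ → ℝ)
    (hε0 : ∀ k, 0 ≤ ε k) (hεsum : Summable ε) (ρ : ℝ) (hρ : 0 < ρ)
    (hineq : ∀ k : ℕ,
      ‖x (k + 1) - p‖ ^ 2 ≤ ‖x k - p‖ ^ 2 - ρ * ‖x (k + 1) - x k‖ + ε k) :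
    ∃ l : H, Filter.Tendsto x Filter.atTop (nhds l) := by
  set a : ℕ → ℝ := fun k => ‖x (k + 1) - x k‖ with ha
  have hsum : Summable a := by
    apply summable_of_sum_range_le (fun k => norm_nonneg _)
      (c := (‖x 0 - p‖ ^ 2 + ∑' k, ε k) / ρ)
    intro n
    rw [le_div_iff₀ hρ, Finset.sum_mul]
    have key : ∀ k, a k * ρ ≤ (‖x k - p‖ ^ 2 - ‖x (k + 1) - p‖ ^ 2) + ε k := by
      intro k
      have := hineq k
      simp only [ha]
      nlinarith [this]
    calc ∑ k ∈ Finset.range n, a k * ρ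
        ≤ ∑ k ∈ Finset.range n, ((‖x k - p‖ ^ 2 - ‖x (k + 1) - p‖ ^ 2) + ε k) :=
          Finset.sum_le_sum fun k _ => key k
      _ = (‖x 0 - p‖ ^ 2 - ‖x n - p‖ ^ 2) + ∑ k ∈ Finset.range n, ε k := by
          rw [Finset.sum_add_distrib, Finset.sum_range_sub' (fun k => ‖x k - p‖ ^ 2)]
      _ ≤ ‖x 0 - p‖ ^ 2 + ∑' k, ε k := by
          have h1 : (0:ℝ) ≤ ‖x n - p‖ ^ 2 := by positivity
          have h2 : ∑ k ∈ Finset.range n, ε k ≤ ∑' k, ε k :=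
            Summable.sum_le_tsum _ (fun k _ => hε0 k) hεsum 
          linarith
  have hcauchy : CauchySeq x := by
    apply cauchySeq_of_summable_dist
    have : (fun n => dist (x n) (x (n + 1))) = a := by
      funext n
      simp [ha, dist_eq_norm, norm_sub_rev]
    rw [this]
    exact hsum
  exact cauchySeq_tendsto_of_complete hcauchy
end

section
/- Let H be a real Hilbert space, M a nonempty subset of H, and (x_k) a sequence in H that is Fejér* monotone with respect to M. Then (x_k) converges strongly (in norm) to a point of M if and only if every weak cluster point of (x_k) belongs to M and (x_k) has at least one strong cluster point. (A weak cluster point is the weak limit of some subsequence, where weak convergence to w means ⟨x_k, y⟩ → ⟨w, y⟩ for every y ∈ H; a strong cluster point is the limit in norm of some subsequence.) -/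
open scoped RealInnerProductSpace

theorem fejerStar_strong_convergence_iff_weak_and_strong {H : Type*} [NormedAddCommGroup H]
    [InnerProductSpace ℝ H] [CompleteSpace H] (M : Set H) (hM : M.Nonempty) (x : ℕ → H)
    (hx : FejerStarMonotone x M) :
    (∃ w ∈ M, Filter.Tendsto x Filter.atTop (nhds w)) ↔
      ((∀ w : H, IsWeakClusterPt x w → w ∈ M) ∧ ∃ w : H, IsStrongClusterPt x w) := by

  constructor
  · rintro ⟨w, hwM, hw⟩
    constructor
    · rintro w' ⟨φ, hφ, hweak⟩
      have hstrong : Filter.Tendsto (x ∘ φ) Filter.atTop (nhds w) :=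
        hw.comp hφ.tendsto_atTop
      have h1 : ∀ y : H, ⟪w', y⟫ = ⟪w, y⟫ := fun y =>
        tendsto_nhds_unique (hweak y) (hstrong.inner tendsto_const_nhds)
      have hww : w' = w := by
        have h2 : ⟪w' - w, w' - w⟫ = 0 := by
          rw [inner_sub_left, h1 (w' - w)]; ring
        exact sub_eq_zero.mp (inner_self_eq_zero.mp h2)
      rwa [hww]
    · exact ⟨w, id, strictMono_id, hw⟩
  · rintro ⟨hweak, w, φ, hφ, hstrong⟩
    have hwM : w ∈ M := hweak w ⟨φ, hφ, fun y => hstrong.inner tendsto_const_nhds⟩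
    refine ⟨w, hwM, ?_⟩
    obtain ⟨N, hN⟩ := hx w hwM
    have hanti : ∀ m n, N ≤ m → m ≤ n → ‖x n - w‖ ≤ ‖x m - w‖ := by
      intro m n hm hmn
      induction n, hmn using Nat.le_induction with
      | base => exact le_rfl
      | succ n hn ih => exact le_trans (hN n (le_trans hm hn)) ih
    rw [tendsto_iff_norm_sub_tendsto_zero]
    have hsub : Filter.Tendsto (fun k => ‖x (φ k) - w‖) Filter.atTop (nhds 0) :=
      tendsto_iff_norm_sub_tendsto_zero.mp hstrong
    rw [Metric.tendsto_atTop] at hsub ⊢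
    intro ε hε
    obtain ⟨K, hK⟩ := hsub ε hε
    refine ⟨φ (max K N), fun k hk => ?_⟩
    have h0 : ‖x (φ (max K N)) - w‖ < ε := by
      have := hK (max K N) (le_max_left _ _)
      rwa [Real.dist_eq, sub_zero, abs_of_nonneg (norm_nonneg _)] at this
    have h1 : ‖x k - w‖ ≤ ‖x (φ (max K N)) - w‖ :=
      hanti _ _ (le_trans (le_max_right _ _) (hφ.le_apply)) hk
    rw [Real.dist_eq, sub_zero, abs_of_nonneg (norm_nonneg _)]
    exact lt_of_le_of_lt h1 h0
end

section
/- There exist a nonempty set M ⊆ ℝ² and a sequence (x_k) in ℝ² such that (x_k) is Fejér* monotone with respect to M but (x_k) is not Fejér* monotone with respect to the closure of the convex hull of M. (Concretely, one may take M = {(1/2^k, 0) : k ∈ ℕ} and the sequence defined by x⁰ = (0,2), x^{2ℓ+1} = x^{2ℓ} + (1/2^ℓ, 0), x^{2ℓ+2} = (0, √(‖x^{2ℓ+1} − (1,0)‖² − 1)); this sequence is Fejér* monotone with respect to M but fails the Fejér* inequality at the point (0,0) ∈ closure(conv M) along all even indices.) -/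
noncomputable def fejV (a b : ℝ) : EuclideanSpace ℝ (Fin 2) :=
  (EuclideanSpace.equiv (Fin 2) ℝ).symm ![a, b]

lemma fejV_norm (a b : ℝ) : ‖fejV a b‖ = Real.sqrt (a^2 + b^2) := by
  rw [EuclideanSpace.norm_eq]
  simp [fejV, Fin.sum_univ_two, sq_abs]

lemma fejV_sub (a b c d : ℝ) : fejV a b - fejV c d = fejV (a-c) (b-d) := by
  ext i; fin_cases i <;> simp [fejV]

lemma fejV_zero : (0 : EuclideanSpace ℝ (Fin 2)) = fejV 0 0 := by
  ext i; fin_cases i <;> simp [fejV]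

/-- squared second coordinate of the even terms -/
noncomputable def fejY : ℕ → ℝ
  | 0 => 5
  | (ℓ+1) => fejY ℓ + (((2:ℝ)^ℓ)⁻¹)^2 - 2*((2:ℝ)^ℓ)⁻¹

lemma fejY_ge (ℓ : ℕ) : 1 + 4*((2:ℝ)^ℓ)⁻¹ ≤ fejY ℓ := by
  induction ℓ with
  | zero => norm_num [fejY]
  | succ n ih =>
    have hd : (0:ℝ) < ((2:ℝ)^n)⁻¹ := by positivity
    have h2 : ((2:ℝ)^(n+1))⁻¹ = ((2:ℝ)^n)⁻¹ / 2 := by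
      rw [pow_succ]; ring
    rw [fejY, h2]
    nlinarith [ih, sq_nonneg (((2:ℝ)^n)⁻¹)]

lemma fejY_pos (ℓ : ℕ) : 0 < fejY ℓ := by
  have := fejY_ge ℓ
  have : (0:ℝ) < 1 + 4*((2:ℝ)^ℓ)⁻¹ := by positivity
  linarith [fejY_ge ℓ]

noncomputable def fejy (ℓ : ℕ) : ℝ := Real.sqrt (fejY ℓ)

lemma fejy_sq (ℓ : ℕ) : (fejy ℓ)^2 = fejY ℓ :=
  Real.sq_sqrt (fejY_pos ℓ).le

/-- the sequence -/
noncomputable def fejX (k : ℕ) : EuclideanSpace ℝ (Fin 2) :=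
  if k % 2 = 0 then fejV 0 (fejy (k/2)) else fejV ((2:ℝ)^(k/2))⁻¹ (fejy (k/2))

/-- There are a nonempty set `M ⊆ ℝ²` and a sequence in `ℝ²` (with the Euclidean norm)
that is Fejér* monotone with respect to `M` but not with respect to the closure of the
convex hull of `M`. -/
theorem exists_fejerStar_not_fejerStar_closure_convexHull :
    ∃ (M : Set (EuclideanSpace ℝ (Fin 2))) (x : ℕ → EuclideanSpace ℝ (Fin 2)),
      M.Nonempty ∧ FejerStarMonotone x M ∧
        ¬ FejerStarMonotone x (closure (convexHull ℝ M)) := by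
  refine ⟨Set.range (fun n : ℕ => fejV ((2:ℝ)^n)⁻¹ 0), fejX, ⟨_, Set.mem_range_self 0⟩, ?_, ?_⟩
  · -- Fejér* monotone w.r.t. M
    rintro p ⟨n, rfl⟩
    refine ⟨2*n, fun k hk => ?_⟩
    set q : ℝ := ((2:ℝ)^n)⁻¹ with hq
    have hqpos : 0 < q := by positivity
    have hq1 : q ≤ 1 := by
      rw [hq]; exact inv_le_one_of_one_le₀ (one_le_pow₀ (by norm_num))
    have hln : n ≤ k / 2 := by omega
    set ℓ : ℕ := k / 2 with hl
    have hd : ((2:ℝ)^ℓ)⁻¹ ≤ q := by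
      rw [hq]
      exact inv_anti₀ (by positivity) (pow_le_pow_right₀ (by norm_num) hln)
    have hdpos : (0:ℝ) < ((2:ℝ)^ℓ)⁻¹ := by positivity
    rcases Nat.even_or_odd k with he | ho
    · -- k even : horizontal move
      have h1 : k % 2 = 0 := Nat.even_iff.mp he
      have h2 : (k+1) % 2 = 1 := by omega
      have h3 : (k+1) / 2 = ℓ := by omega
      rw [fejX, fejX, if_pos h1, if_neg (by omega), h3, ← hl, fejV_sub, fejV_sub,
        fejV_norm, fejV_norm]
      apply Real.sqrt_le_sqrt
      nlinarith [hd, hdpos, hqpos]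
    · -- k odd : move back to the axis
      have h1 : ¬ (k % 2 = 0) := by
        rcases ho with ⟨m, hm⟩; omega
      have h2 : (k+1) % 2 = 0 := by omega
      have h3 : (k+1) / 2 = ℓ + 1 := by omega
      rw [fejX, fejX, if_neg h1, if_pos h2, h3, ← hl, fejV_sub, fejV_sub,
        fejV_norm, fejV_norm]
      apply Real.sqrt_le_sqrt
      have hY : (fejy (ℓ+1))^2 = (fejy ℓ)^2 + (((2:ℝ)^ℓ)⁻¹)^2 - 2*((2:ℝ)^ℓ)⁻¹ := by
        rw [fejy_sq, fejy_sq, fejY]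
      nlinarith [hY, hdpos, hq1]
  · -- not Fejér* monotone w.r.t. closure of convex hull
    intro h
    have h0 : (0 : EuclideanSpace ℝ (Fin 2)) ∈
        closure (convexHull ℝ (Set.range (fun n : ℕ => fejV ((2:ℝ)^n)⁻¹ 0))) := by
      have ht : Filter.Tendsto (fun n : ℕ => fejV ((2:ℝ)^n)⁻¹ 0) Filter.atTop
          (nhds (0 : EuclideanSpace ℝ (Fin 2))) := by
        rw [tendsto_iff_norm_sub_tendsto_zero]
        have heq : ∀ n : ℕ, ‖fejV ((2:ℝ)^n)⁻¹ 0 - 0‖ = ((1:ℝ)/2)^n := by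
          intro n
          rw [sub_zero, fejV_norm]
          rw [show (((2:ℝ)^n)⁻¹)^2 + 0^2 = (((2:ℝ)^n)⁻¹)^2 by ring,
            Real.sqrt_sq (by positivity)]
          rw [one_div, inv_pow]
        simp only [heq]
        exact tendsto_pow_atTop_nhds_zero_of_lt_one (by norm_num) (by norm_num)
      exact mem_closure_of_tendsto ht (Filter.Eventually.of_forall fun n =>
        subset_convexHull ℝ _ (Set.mem_range_self n))
    obtain ⟨N, hN⟩ := h 0 h0
    have hk := hN (2*N) (by omega)
    have h1 : (2*N) % 2 = 0 := by omega
    have h2 : (2*N+1) % 2 = 1 := by omega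
    have h3 : (2*N+1) / 2 = N := by omega
    have h4 : (2*N) / 2 = N := by omega
    rw [fejX, fejX, if_pos h1, if_neg (by omega), h3, h4, sub_zero, sub_zero,
      fejV_norm, fejV_norm] at hk
    have hdpos : (0:ℝ) < ((2:ℝ)^N)⁻¹ := by positivity
    have : Real.sqrt (0^2 + (fejy N)^2) < Real.sqrt ((((2:ℝ)^N)⁻¹)^2 + (fejy N)^2) := by
      apply Real.sqrt_lt_sqrt (by positivity)
      nlinarith
    linarith
end
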